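/- arXiv:2210.13176 — 6 statements merged into one kernel-verified Lean document; each statement's English description precedes it below -/
import Mathlib

section
/- For any bounded subset M of a closed subspace X of B(Ω,Y), the extended equicontinuity characteristics satisfy ω_B(M) ≤ ω_X(M) ≤ 2 ω_B(M). -/
open Metric Set BoundedContinuousFunction

/-- Kuratowski measure of noncompactness: infimum of all `ε > 0` such that the set can be
covered by finitely many sets of diameter at most `ε`. -/
noncomputable def kurMNC {E : Type*} [PseudoMetricSpace E] (A : Set E) : ℝ :=
  sInf {ε : ℝ | 0 < ε ∧ ∃ (n : ℕ) (C : Fin n → Set E),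
    A ⊆ ⋃ i, C i ∧ ∀ i, Metric.diam (C i) ≤ ε}

/-- Hausdorff measure of noncompactness with centers of the `ε`-net restricted to `S`. -/
noncomputable def hausMNCin {E : Type*} [PseudoMetricSpace E] (S A : Set E) : ℝ :=
  sInf {ε : ℝ | 0 < ε ∧ ∃ F : Set E, F.Finite ∧ F ⊆ S ∧
    A ⊆ ⋃ y ∈ F, Metric.closedBall y ε}

/-- Hausdorff measure of noncompactness: infimum of all `ε > 0` such that the set admits a
finite `ε`-net in the whole space. -/
noncomputable def hausMNC {E : Type*} [PseudoMetricSpace E] (A : Set E) : ℝ :=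
  hausMNCin Set.univ A

/-- A finite partition of `Ω` (indexed by `Fin n`). -/
def IsPartition {Ω : Type*} {n : ℕ} (A : Fin n → Set Ω) : Prop :=
  (⋃ i, A i) = Set.univ ∧ Pairwise (Function.onFun Disjoint A)

section Defs

variable {Ω Y : Type*} [TopologicalSpace Ω] [NormedAddCommGroup Y]

/-- `M(x) = {f x : f ∈ M}`. -/
def evalSet (M : Set (Ω →ᵇ Y)) (x : Ω) : Set Y := (fun f : Ω →ᵇ Y => f x) '' M

/-- `M(Ω) = {f x : f ∈ M, x ∈ Ω}`. -/
def rangeSet (M : Set (Ω →ᵇ Y)) : Set Y := ⋃ f ∈ M, Set.range (f : Ω → Y)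

/-- `μ_α(M) = sup_{x ∈ Ω} α(M(x))`. -/
noncomputable def muAlpha (M : Set (Ω →ᵇ Y)) : ℝ := ⨆ x : Ω, kurMNC (evalSet M x)

/-- `μ_γ(M) = sup_{x ∈ Ω} γ(M(x))`. -/
noncomputable def muGamma (M : Set (Ω →ᵇ Y)) : ℝ := ⨆ x : Ω, hausMNC (evalSet M x)

/-- `ω(M)`: infimum of `ε > 0` admitting a finite partition `{A_1, …, A_n}` of `Ω` with
`diam (f '' A i) ≤ ε` for all `f ∈ M` and all `i`. -/
noncomputable def omegaPlain (M : Set (Ω →ᵇ Y)) : ℝ :=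
  sInf {ε : ℝ | 0 < ε ∧ ∃ (n : ℕ) (A : Fin n → Set Ω), IsPartition A ∧
    ∀ f ∈ M, ∀ i, Metric.diam ((f : Ω → Y) '' A i) ≤ ε}

/-- `ω_X(M)`: infimum of `ε > 0` admitting a finite partition `{A_1, …, A_n}` of `Ω` and a
finite set `{φ_1, …, φ_m} ⊆ X` such that every `f ∈ M` has some `j` with
`diam ((f - φ j) '' A i) ≤ ε` for all `i`. -/
noncomputable def omegaX (X : Set (Ω →ᵇ Y)) (M : Set (Ω →ᵇ Y)) : ℝ :=
  sInf {ε : ℝ | 0 < ε ∧ ∃ (n : ℕ) (A : Fin n → Set Ω), IsPartition A ∧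
    ∃ (m : ℕ) (φ : Fin m → (Ω →ᵇ Y)), (∀ j, φ j ∈ X) ∧
      ∀ f ∈ M, ∃ j, ∀ i, Metric.diam ((⇑(f - φ j) : Ω → Y) '' A i) ≤ ε}

end Defs

/- Proof idea: a centre `φ j ∈ B(Ω,Y)` serving some `f ∈ M` at scale `ε` can be replaced by
such an `f` itself, which lies in `X`; by the triangle inequality for oscillations on each
`A i`, the new centre serves every function the old one served, at scale `2ε`. -/

theorem Metric.diam_image_sub_le {α E : Type*} [SeminormedAddCommGroup E] {f g : α → E}
    {A : Set α} (hf : Bornology.IsBounded (f '' A)) (hg : Bornology.IsBounded (g '' A)) :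
    diam ((f - g) '' A) ≤ diam (f '' A) + diam (g '' A) := by
  refine diam_le_of_forall_dist_le (add_nonneg diam_nonneg diam_nonneg) ?_
  rintro _ ⟨x, hx, rfl⟩ _ ⟨y, hy, rfl⟩
  exact dist_sub_sub_le_of_le (dist_le_diam_of_mem hf (mem_image_of_mem f hx)
    (mem_image_of_mem f hy)) (dist_le_diam_of_mem hg (mem_image_of_mem g hx)
    (mem_image_of_mem g hy))

section OmegaX

variable {Ω Y : Type*} [TopologicalSpace Ω] [NormedAddCommGroup Y]

theorem BoundedContinuousFunction.diam_image_sub_le (u v : Ω →ᵇ Y) (A : Set Ω) :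
    diam (⇑(u - v) '' A) ≤ diam (⇑u '' A) + diam (⇑v '' A) :=
  Metric.diam_image_sub_le (u.isBounded_range.subset (image_subset_range _ _))
    (v.isBounded_range.subset (image_subset_range _ _))

def omegaXSet (X M : Set (Ω →ᵇ Y)) : Set ℝ :=
  {ε : ℝ | 0 < ε ∧ ∃ (n : ℕ) (A : Fin n → Set Ω), IsPartition A ∧
    ∃ (m : ℕ) (φ : Fin m → (Ω →ᵇ Y)), (∀ j, φ j ∈ X) ∧
      ∀ f ∈ M, ∃ j, ∀ i, diam ((⇑(f - φ j) : Ω → Y) '' A i) ≤ ε}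

theorem omegaX_eq_sInf (X M : Set (Ω →ᵇ Y)) : omegaX X M = sInf (omegaXSet X M) := rfl

theorem bddBelow_omegaXSet (X M : Set (Ω →ᵇ Y)) : BddBelow (omegaXSet X M) :=
  ⟨0, fun _ hε => hε.1.le⟩

theorem omegaXSet_mono {X X' : Set (Ω →ᵇ Y)} (h : X ⊆ X') (M : Set (Ω →ᵇ Y)) :
    omegaXSet X M ⊆ omegaXSet X' M := by
  rintro ε ⟨hε, n, A, hA, m, φ, hφ, hM⟩
  exact ⟨hε, n, A, hA, m, φ, fun j => h (hφ j), hM⟩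

theorem omegaXSet_eq_empty_of_univ {X M : Set (Ω →ᵇ Y)} (h : omegaXSet univ M = ∅) :
    omegaXSet X M = ∅ :=
  subset_empty_iff.mp (h ▸ omegaXSet_mono (subset_univ X) M)

theorem two_mul_mem_omegaXSet {X M : Set (Ω →ᵇ Y)} (hMX : M ⊆ X) (hX : X.Nonempty) {ε : ℝ}
    (hε : ε ∈ omegaXSet univ M) : 2 * ε ∈ omegaXSet X M := by
  classical
  obtain ⟨hε, n, A, hA, m, φ, -, hφ⟩ := hε
  let Serves (f : Ω →ᵇ Y) (j : Fin m) : Prop := ∀ i, diam (⇑(f - φ j) '' A i) ≤ ε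
  let ψ (j : Fin m) : Ω →ᵇ Y := if h : ∃ f ∈ M, Serves f j then h.choose else hX.some
  have hψX (j : Fin m) : ψ j ∈ X := by
    by_cases h : ∃ f ∈ M, Serves f j
    · simpa only [ψ, dif_pos h] using hMX h.choose_spec.1
    · simpa only [ψ, dif_neg h] using hX.some_mem
  refine ⟨by positivity, n, A, hA, m, ψ, hψX, fun f hf => ?_⟩
  obtain ⟨j, hfj⟩ := hφ f hf
  have h : ∃ f ∈ M, Serves f j := ⟨f, hf, hfj⟩
  have hψj : Serves (ψ j) j := by simpa only [ψ, dif_pos h] using h.choose_spec.2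
  refine ⟨j, fun i => ?_⟩
  calc diam (⇑(f - ψ j) '' A i) = diam (⇑((f - φ j) - (ψ j - φ j)) '' A i) := by
        rw [sub_sub_sub_cancel_right]
    _ ≤ diam (⇑(f - φ j) '' A i) + diam (⇑(ψ j - φ j) '' A i) :=
        BoundedContinuousFunction.diam_image_sub_le _ _ _
    _ ≤ 2 * ε := by linarith [hfj i, hψj i]

theorem omegaX_univ_le {X M : Set (Ω →ᵇ Y)} (hMX : M ⊆ X) (hX : X.Nonempty) :
    omegaX univ M ≤ omegaX X M := by
  rw [omegaX_eq_sInf, omegaX_eq_sInf]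
  rcases (omegaXSet univ M).eq_empty_or_nonempty with hS | ⟨ε, hε⟩
  · rw [hS, omegaXSet_eq_empty_of_univ hS]
  · exact csInf_le_csInf (bddBelow_omegaXSet _ _) ⟨_, two_mul_mem_omegaXSet hMX hX hε⟩
      (omegaXSet_mono (subset_univ X) M)

theorem omegaX_le_two_mul {X M : Set (Ω →ᵇ Y)} (hMX : M ⊆ X) (hX : X.Nonempty) :
    omegaX X M ≤ 2 * omegaX univ M := by
  rw [omegaX_eq_sInf, omegaX_eq_sInf, ← smul_eq_mul, ← Real.sInf_smul_of_nonneg zero_le_two]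
  rcases (omegaXSet univ M).eq_empty_or_nonempty with hS | hS
  · rw [hS, smul_set_empty, omegaXSet_eq_empty_of_univ hS]
  · refine csInf_le_csInf (bddBelow_omegaXSet _ _) hS.smul_set ?_
    rintro _ ⟨ε, hε, rfl⟩
    exact two_mul_mem_omegaXSet hMX hX hε

end OmegaX

theorem stmt6_general {Ω Y : Type*} [TopologicalSpace Ω]
    [NormedAddCommGroup Y] [NormedSpace ℝ Y]
    (X : Submodule ℝ (Ω →ᵇ Y))
    (M : Set (Ω →ᵇ Y)) (hMX : M ⊆ (X : Set (Ω →ᵇ Y))) :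
    omegaX Set.univ M ≤ omegaX (X : Set (Ω →ᵇ Y)) M ∧
      omegaX (X : Set (Ω →ᵇ Y)) M ≤ 2 * omegaX Set.univ M :=
  ⟨omegaX_univ_le hMX ⟨0, X.zero_mem⟩, omegaX_le_two_mul hMX ⟨0, X.zero_mem⟩⟩

theorem stmt6 {Ω Y : Type*} [TopologicalSpace Ω] [DiscreteTopology Ω] [Nonempty Ω]
    [NormedAddCommGroup Y] [NormedSpace ℝ Y] [CompleteSpace Y]
    (X : Submodule ℝ (Ω →ᵇ Y)) (hX : IsClosed (X : Set (Ω →ᵇ Y)))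
    (M : Set (Ω →ᵇ Y)) (hMX : M ⊆ (X : Set (Ω →ᵇ Y))) (hM : Bornology.IsBounded M) :
    omegaX Set.univ M ≤ omegaX (X : Set (Ω →ᵇ Y)) M ∧
      omegaX (X : Set (Ω →ᵇ Y)) M ≤ 2 * omegaX Set.univ M :=
  stmt6_general X M hMX
end

section
/- If X is a Banach subspace of the space TB(Ω,Y) of totally bounded functions, then for every bounded M ⊆ X one has ω(M) = ω_X(M). -/
open Metric Set BoundedContinuousFunction

/-! Taking `φ = 0` gives `ω_X(M) ≤ ω(M)`. Conversely, let a partition `A` and `φ_1, …, φ_m ∈ X`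
witness `ω_X(M) ≤ ε`. Each `φ_j` has totally bounded range, so a finite `δ/2`-net of it
assigns to every point of `Ω` one of finitely many centres; the fibres of
`x ↦ (index of the piece of A containing x, centres of φ_1 x, …, φ_m x)` form a finite partition
refining `A` on which every `φ_j` oscillates by at most `δ`. Writing `f = (f - φ_j) + φ_j`,
this partition witnesses `ω(M) ≤ ε + δ`. -/

theorem Real.sInf_eq_sInf_of_subset_of_forall_add_mem {S T : Set ℝ} (hT : BddBelow T)
    (hST : S ⊆ T) (hTS : ∀ ε ∈ T, ∀ δ > 0, ε + δ ∈ S) : sInf S = sInf T := by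
  rcases T.eq_empty_or_nonempty with rfl | ⟨ε, hε⟩
  · rw [subset_empty_iff.mp hST]
  have hS : S.Nonempty := ⟨ε + 1, hTS ε hε 1 one_pos⟩
  refine le_antisymm ?_ (csInf_le_csInf hT hS hST)
  exact le_csInf ⟨ε, hε⟩ fun ε hε =>
    le_of_forall_pos_le_add fun δ hδ => csInf_le (hT.mono hST) (hTS ε hε δ hδ)

section Partitions

variable {Ω κ : Type*}

theorem IsPartition.exists_mem {n : ℕ} {A : Fin n → Set Ω} (hA : IsPartition A) (x : Ω) :
    ∃ i, x ∈ A i :=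
  mem_iUnion.mp (hA.1 ▸ mem_univ x)

theorem exists_isPartition_fibers [Finite κ] (σ : Ω → κ) :
    ∃ (N : ℕ) (B : Fin N → Set Ω), IsPartition B ∧ ∀ k, ∀ x ∈ B k, ∀ y ∈ B k, σ x = σ y := by
  have := Fintype.ofFinite κ
  let e := Fintype.equivFin κ
  refine ⟨_, fun k => σ ⁻¹' {e.symm k}, ⟨?_, ?_⟩, fun k x hx y hy => hx.trans hy.symm⟩
  · exact eq_univ_of_forall fun x => mem_iUnion.mpr ⟨e (σ x), by simp⟩
  · exact fun k k' hkk' => disjoint_left.mpr fun x hx hx' =>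
      hkk' (e.symm.injective (hx.symm.trans hx'))

theorem exists_isPartition_fibers_of_finite_range {σ : Ω → κ} (hσ : (range σ).Finite) :
    ∃ (N : ℕ) (B : Fin N → Set Ω), IsPartition B ∧ ∀ k, ∀ x ∈ B k, ∀ y ∈ B k, σ x = σ y := by
  have := hσ.to_subtype
  obtain ⟨N, B, hB, hfib⟩ := exists_isPartition_fibers (rangeFactorization σ)
  exact ⟨N, B, hB, fun k x hx y hy => congrArg Subtype.val (hfib k x hx y hy)⟩

end Partitions

theorem TotallyBounded.exists_finite_range_dist_lt {Ω E : Type*} [PseudoMetricSpace E]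
    {g : Ω → E} (hg : TotallyBounded (range g)) {δ : ℝ} (hδ : 0 < δ) :
    ∃ c : Ω → E, (range c).Finite ∧ ∀ x, dist (g x) (c x) < δ := by
  obtain ⟨t, ht, hcover⟩ := totallyBounded_iff.mp hg δ hδ
  have hnear : ∀ x, ∃ y ∈ t, dist (g x) y < δ := fun x => by
    simpa only [mem_iUnion₂, mem_ball, exists_prop] using hcover (mem_range_self x)
  choose c hct hc using hnear
  exact ⟨c, ht.subset (range_subset_iff.mpr hct), hc⟩

section Omega

variable {Ω Y : Type*} [TopologicalSpace Ω] [NormedAddCommGroup Y]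

def omegaPlainAdmissible (M : Set (Ω →ᵇ Y)) : Set ℝ :=
  {ε : ℝ | 0 < ε ∧ ∃ (n : ℕ) (A : Fin n → Set Ω), IsPartition A ∧
    ∀ f ∈ M, ∀ i, Metric.diam ((f : Ω → Y) '' A i) ≤ ε}

def omegaXAdmissible (X M : Set (Ω →ᵇ Y)) : Set ℝ :=
  {ε : ℝ | 0 < ε ∧ ∃ (n : ℕ) (A : Fin n → Set Ω), IsPartition A ∧
    ∃ (m : ℕ) (φ : Fin m → (Ω →ᵇ Y)), (∀ j, φ j ∈ X) ∧
      ∀ f ∈ M, ∃ j, ∀ i, Metric.diam ((⇑(f - φ j) : Ω → Y) '' A i) ≤ ε}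

theorem bddBelow_omegaXAdmissible (X M : Set (Ω →ᵇ Y)) : BddBelow (omegaXAdmissible X M) :=
  ⟨0, fun _ hε => hε.1.le⟩

theorem omegaPlainAdmissible_subset_omegaXAdmissible {X : Set (Ω →ᵇ Y)} (hX : 0 ∈ X)
    (M : Set (Ω →ᵇ Y)) : omegaPlainAdmissible M ⊆ omegaXAdmissible X M := by
  rintro ε ⟨hε, n, A, hA, hdiam⟩
  exact ⟨hε, n, A, hA, 1, fun _ => 0, fun _ => hX, fun f hf => ⟨0, by simpa using hdiam f hf⟩⟩

theorem add_mem_omegaPlainAdmissible {X M : Set (Ω →ᵇ Y)}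
    (hXTB : ∀ φ ∈ X, TotallyBounded (range (φ : Ω → Y))) {ε δ : ℝ}
    (hε : ε ∈ omegaXAdmissible X M) (hδ : 0 < δ) : ε + δ ∈ omegaPlainAdmissible M := by
  obtain ⟨hεpos, n, A, hA, m, φ, hφX, hφ⟩ := hε
  choose iA hiA using hA.exists_mem
  choose c hcfin hc using fun j => (hXTB _ (hφX j)).exists_finite_range_dist_lt (half_pos hδ)
  have hσ : (range fun x => (iA x, fun j => c j x)).Finite :=
    ((toFinite (range iA)).prod (Set.Finite.pi hcfin)).subset <| range_subset_iff.mpr fun x =>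
      ⟨mem_range_self x, fun j _ => mem_range_self x⟩
  obtain ⟨N, B, hB, hfib⟩ := exists_isPartition_fibers_of_finite_range hσ
  refine ⟨by positivity, N, B, hB, fun f hf k => ?_⟩
  obtain ⟨j, hj⟩ := hφ f hf
  refine diam_le_of_forall_dist_le (by positivity) ?_
  rintro _ ⟨x, hx, rfl⟩ _ ⟨y, hy, rfl⟩
  have hiAxy : iA x = iA y := congrArg Prod.fst (hfib k x hx y hy)
  have hcxy : c j x = c j y := congrFun (congrArg Prod.snd (hfib k x hx y hy)) j
  have hrest : dist ((f - φ j) x) ((f - φ j) y) ≤ ε :=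
    (dist_le_diam_of_mem ((f - φ j).isBounded_range.subset (image_subset_range _ _))
      (mem_image_of_mem _ (hiA x)) (mem_image_of_mem _ (hiAxy ▸ hiA y))).trans (hj (iA x))
  have hnet : dist (φ j x) (φ j y) ≤ δ := by
    calc dist (φ j x) (φ j y) ≤ dist (φ j x) (c j x) + dist (φ j y) (c j y) := by
          rw [hcxy]; exact dist_triangle_right _ _ _
      _ ≤ δ := by linarith [hc j x, hc j y]
  calc dist (f x) (f y) = dist ((f - φ j) x + φ j x) ((f - φ j) y + φ j y) := by simp
    _ ≤ dist ((f - φ j) x) ((f - φ j) y) + dist (φ j x) (φ j y) := dist_add_add_le _ _ _ _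
    _ ≤ ε + δ := add_le_add hrest hnet

end Omega

theorem stmt7_general {Ω Y : Type*} [TopologicalSpace Ω]
    [NormedAddCommGroup Y] [NormedSpace ℝ Y]
    (X : Submodule ℝ (Ω →ᵇ Y))
    (hXTB : ∀ f : Ω →ᵇ Y, f ∈ X → TotallyBounded (Set.range (f : Ω → Y)))
    (M : Set (Ω →ᵇ Y)) :
    omegaPlain M = omegaX (X : Set (Ω →ᵇ Y)) M :=
  Real.sInf_eq_sInf_of_subset_of_forall_add_mem (bddBelow_omegaXAdmissible _ M)
    (omegaPlainAdmissible_subset_omegaXAdmissible X.zero_mem M)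
    fun _ hε _ hδ => add_mem_omegaPlainAdmissible hXTB hε hδ

theorem stmt7 {Ω Y : Type*} [TopologicalSpace Ω] [DiscreteTopology Ω] [Nonempty Ω]
    [NormedAddCommGroup Y] [NormedSpace ℝ Y] [CompleteSpace Y]
    (X : Submodule ℝ (Ω →ᵇ Y)) (hX : IsClosed (X : Set (Ω →ᵇ Y)))
    (hXTB : ∀ f : Ω →ᵇ Y, f ∈ X → TotallyBounded (Set.range (f : Ω → Y)))
    (M : Set (Ω →ᵇ Y)) (hMX : M ⊆ (X : Set (Ω →ᵇ Y))) (hM : Bornology.IsBounded M) :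
    omegaPlain M = omegaX (X : Set (Ω →ᵇ Y)) M :=
  stmt7_general X hXTB M
end

section
/- For any bounded subset M of a Banach subspace X of B(Ω,Y), the convex hull satisfies ω_X(co M) = ω_X(M). -/
open Metric Set BoundedContinuousFunction

/-!
A set `M` is `ε`-admissible for `ω_X` when `M ⊆ K + C`, where `K` is the convex hull of
finitely many elements of `X` and `C` is the set of functions whose oscillation on every piece
of a fixed partition is at most `ε`. Oscillation on a set is a convex function, so `C` is
convex, hence so is `K + C`, and it contains `co M` as well. Since `K` is compact, a finite
`δ`-net of `K` in `K ⊆ X` turns this into an `(ε + 2δ)`-admissible cover of `co M`.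
-/

section Oscillation

variable {Ω Y : Type*} [TopologicalSpace Ω] [NormedAddCommGroup Y]

lemma BoundedContinuousFunction.diam_image_add_le (f g : Ω →ᵇ Y) (s : Set Ω) :
    diam (⇑(f + g) '' s) ≤ diam (f '' s) + diam (g '' s) := by
  refine diam_le_of_forall_dist_le (add_nonneg diam_nonneg diam_nonneg) ?_
  rintro _ ⟨x, hx, rfl⟩ _ ⟨y, hy, rfl⟩
  calc dist ((f + g) x) ((f + g) y) ≤ dist (f x) (f y) + dist (g x) (g y) :=
        dist_add_add_le _ _ _ _
    _ ≤ diam (f '' s) + diam (g '' s) :=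
        add_le_add (dist_le_diam_of_mem (f.isBounded_image s) (mem_image_of_mem _ hx)
            (mem_image_of_mem _ hy))
          (dist_le_diam_of_mem (g.isBounded_image s) (mem_image_of_mem _ hx)
            (mem_image_of_mem _ hy))

lemma BoundedContinuousFunction.diam_image_smul {𝕜 : Type*} [NormedField 𝕜]
    [NormedSpace 𝕜 Y] (c : 𝕜) (f : Ω →ᵇ Y) (s : Set Ω) :
    diam (⇑(c • f) '' s) = ‖c‖ * diam (f '' s) := by
  rw [coe_smul, ← diam_smul₀, ← image_smul, image_image]

lemma BoundedContinuousFunction.diam_image_le_two_mul_norm (f : Ω →ᵇ Y) (s : Set Ω) :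
    diam (f '' s) ≤ 2 * ‖f‖ := by
  have hsub : f '' s ⊆ closedBall 0 ‖f‖ := by
    rintro _ ⟨x, -, rfl⟩
    simpa using f.norm_coe_le_norm x
  exact (diam_mono hsub isBounded_closedBall).trans (diam_closedBall (norm_nonneg f))

lemma convexOn_diam_image [NormedSpace ℝ Y] (s : Set Ω) :
    ConvexOn ℝ univ fun f : Ω →ᵇ Y => diam (f '' s) := by
  refine ⟨convex_univ, fun f _ g _ a b ha hb _ => ?_⟩
  calc diam (⇑(a • f + b • g) '' s) ≤ diam (⇑(a • f) '' s) + diam (⇑(b • g) '' s) :=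
        diam_image_add_le _ _ s
    _ = a * diam (f '' s) + b * diam (g '' s) := by
        rw [diam_image_smul, diam_image_smul, Real.norm_of_nonneg ha, Real.norm_of_nonneg hb]

lemma convex_setOf_forall_diam_image_le [NormedSpace ℝ Y] {ι : Type*} (A : ι → Set Ω)
    (ε : ℝ) : Convex ℝ {f : Ω →ᵇ Y | ∀ i, diam (f '' A i) ≤ ε} := by
  simpa only [ofPred_forall, mem_univ, true_and] using
    convex_iInter fun i => (convexOn_diam_image (Y := Y) (A i)).convex_le ε

end Oscillation

lemma csInf_eq_of_subset_of_forall_lt_mem {S T : Set ℝ} (hTS : T ⊆ S) (hS : BddBelow S)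
    (h : ∀ ε ∈ S, ∀ η, ε < η → η ∈ T) : sInf T = sInf S := by
  rcases S.eq_empty_or_nonempty with rfl | hSne
  · rw [subset_empty_iff.1 hTS]
  obtain ⟨ε, hε⟩ := hSne
  have hTne : T.Nonempty := ⟨ε + 1, h ε hε _ (lt_add_one ε)⟩
  refine le_antisymm (le_csInf ⟨ε, hε⟩ fun ε hε => ?_) (csInf_le_csInf hS hTne hTS)
  exact le_of_forall_gt_imp_ge_of_dense fun η hη => csInf_le (hS.mono hTS) (h ε hε η hη)

section OmegaX

open scoped Pointwise

variable {Ω Y : Type*} [TopologicalSpace Ω] [NormedAddCommGroup Y]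

/-- `omegaX X M` is, by definition, `sInf {ε | OmegaXAdmissible X M ε}`. -/
def OmegaXAdmissible (X M : Set (Ω →ᵇ Y)) (ε : ℝ) : Prop :=
  0 < ε ∧ ∃ (n : ℕ) (A : Fin n → Set Ω), IsPartition A ∧
    ∃ (m : ℕ) (φ : Fin m → (Ω →ᵇ Y)), (∀ j, φ j ∈ X) ∧
      ∀ f ∈ M, ∃ j, ∀ i, diam ((⇑(f - φ j) : Ω → Y) '' A i) ≤ ε

lemma OmegaXAdmissible.mono {X M N : Set (Ω →ᵇ Y)} {ε : ℝ} (hMN : M ⊆ N)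
    (h : OmegaXAdmissible X N ε) : OmegaXAdmissible X M ε := by
  obtain ⟨hε, n, A, hA, m, φ, hφX, hφ⟩ := h
  exact ⟨hε, n, A, hA, m, φ, hφX, fun f hf => hφ f (hMN hf)⟩

variable [NormedSpace ℝ Y]

lemma OmegaXAdmissible.convexHull_of_lt {X M : Set (Ω →ᵇ Y)} (hX : Convex ℝ X) {ε η : ℝ}
    (h : OmegaXAdmissible X M ε) (hεη : ε < η) :
    OmegaXAdmissible X (convexHull ℝ M) η := by
  obtain ⟨hε, n, A, hA, m, φ, hφX, hφ⟩ := h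
  set K := convexHull ℝ (range φ)
  set C := {f : Ω →ᵇ Y | ∀ i, diam (f '' A i) ≤ ε}
  have hMKC : convexHull ℝ M ⊆ K + C := by
    refine convexHull_min (fun f hf => ?_)
      ((convex_convexHull ℝ _).add (convex_setOf_forall_diam_image_le A ε))
    obtain ⟨j, hj⟩ := hφ f hf
    exact ⟨φ j, subset_convexHull ℝ _ (mem_range_self j), f - φ j, hj, add_sub_cancel _ _⟩
  have hKX : K ⊆ X := convexHull_min (range_subset_iff.2 hφX) hX
  set δ := (η - ε) / 2
  obtain ⟨t, htK, htfin, hKt⟩ :=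
    ((finite_range φ).isCompact_convexHull ℝ).finite_cover_balls (half_pos (sub_pos.2 hεη))
  obtain ⟨p, ψ, rfl⟩ := htfin.fin_embedding
  refine ⟨hε.trans hεη, n, A, hA, p, ψ, fun k => hKX (htK (mem_range_self k)), ?_⟩
  rintro _ hf
  obtain ⟨g, hgK, c, hcC, rfl⟩ := hMKC hf
  obtain ⟨_, ⟨k, rfl⟩, hgk⟩ := mem_iUnion₂.1 (hKt hgK)
  refine ⟨k, fun i => ?_⟩
  calc diam (⇑(g + c - ψ k) '' A i) = diam (⇑((g - ψ k) + c) '' A i) := by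
        rw [sub_add_eq_add_sub, add_sub_right_comm]
    _ ≤ 2 * ‖g - ψ k‖ + ε :=
        (diam_image_add_le _ _ _).trans
          (add_le_add ((g - ψ k).diam_image_le_two_mul_norm _) (hcC i))
    _ ≤ 2 * δ + ε := by
        gcongr
        exact (dist_eq_norm g (ψ k) ▸ mem_ball.1 hgk).le
    _ = η := by ring

lemma omegaX_convexHull {X : Set (Ω →ᵇ Y)} (hX : Convex ℝ X) (M : Set (Ω →ᵇ Y)) :
    omegaX X (convexHull ℝ M) = omegaX X M :=
  csInf_eq_of_subset_of_forall_lt_mem (fun _ => OmegaXAdmissible.mono (subset_convexHull ℝ M))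
    ⟨0, fun _ h => h.1.le⟩ fun _ h _ => OmegaXAdmissible.convexHull_of_lt hX h

end OmegaX

theorem stmt9_general {Ω Y : Type*} [TopologicalSpace Ω]
    [NormedAddCommGroup Y] [NormedSpace ℝ Y]
    (X : Submodule ℝ (Ω →ᵇ Y))
    (M : Set (Ω →ᵇ Y)) :
    omegaX (X : Set (Ω →ᵇ Y)) (convexHull ℝ M) = omegaX (X : Set (Ω →ᵇ Y)) M :=
  omegaX_convexHull X.convex M

theorem stmt9 {Ω Y : Type*} [TopologicalSpace Ω] [DiscreteTopology Ω] [Nonempty Ω]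
    [NormedAddCommGroup Y] [NormedSpace ℝ Y] [CompleteSpace Y]
    (X : Submodule ℝ (Ω →ᵇ Y)) (hX : IsClosed (X : Set (Ω →ᵇ Y)))
    (M : Set (Ω →ᵇ Y)) (hMX : M ⊆ (X : Set (Ω →ᵇ Y))) (hM : Bornology.IsBounded M) :
    omegaX (X : Set (Ω →ᵇ Y)) (convexHull ℝ M) = omegaX (X : Set (Ω →ᵇ Y)) M :=
  stmt9_general X M
end

section
/- For λ ∈ [0,1] and bounded subsets M, N of a Banach subspace X of B(Ω,Y), ω_X(λM + (1−λ)N) ≤ λ ω_X(M) + (1−λ) ω_X(N). -/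
/-!
Given admissible data for `M` at level `ε₁` (a partition `A` and centres `φ`) and for `N` at
level `ε₂` (a partition `B` and centres `ψ`), the common refinement `A ∩ B` together with the
centres `λ φ_j + (1 - λ) ψ_k`, which lie in `X` because `X` is a subspace, is admissible for
`λ M + (1 - λ) N` at level `λ ε₁ + (1 - λ) ε₂`: on each cell, the oscillation of a convex
combination is at most the convex combination of the oscillations. Taking infima gives the claim.
-/

open Metric Set BoundedContinuousFunction

open scoped Pointwise

lemma IsPartition.inter {Ω : Type*} {n m : ℕ} {A : Fin n → Set Ω} {B : Fin m → Set Ω}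
    (hA : IsPartition A) (hB : IsPartition B) :
    IsPartition (fun p : Fin (n * m) =>
      A (finProdFinEquiv.symm p).1 ∩ B (finProdFinEquiv.symm p).2) := by
  constructor
  · refine eq_univ_of_forall fun x => ?_
    obtain ⟨i, hi⟩ := mem_iUnion.mp (hA.1.symm ▸ mem_univ x)
    obtain ⟨j, hj⟩ := mem_iUnion.mp (hB.1.symm ▸ mem_univ x)
    exact mem_iUnion.mpr ⟨finProdFinEquiv (i, j), by simpa using ⟨hi, hj⟩⟩
  · intro p q hpq
    have hne : finProdFinEquiv.symm p ≠ finProdFinEquiv.symm q :=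
      finProdFinEquiv.symm.injective.ne hpq
    by_cases h₁ : (finProdFinEquiv.symm p).1 = (finProdFinEquiv.symm q).1
    · have h₂ : (finProdFinEquiv.symm p).2 ≠ (finProdFinEquiv.symm q).2 :=
        fun h₂ => hne (Prod.ext h₁ h₂)
      exact (hB.2 h₂).mono inter_subset_right inter_subset_right
    · exact (hA.2 h₁).mono inter_subset_left inter_subset_left

lemma diam_image_smul_add_smul_le {α E : Type*} [SeminormedAddCommGroup E] [NormedSpace ℝ E]
    {u v : α → E} {s : Set α} (hu : Bornology.IsBounded (u '' s))
    (hv : Bornology.IsBounded (v '' s)) {a b : ℝ} (ha : 0 ≤ a) (hb : 0 ≤ b) :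
    diam ((fun x => a • u x + b • v x) '' s) ≤ a * diam (u '' s) + b * diam (v '' s) := by
  apply diam_le_of_forall_dist_le (by positivity)
  rintro _ ⟨x, hx, rfl⟩ _ ⟨y, hy, rfl⟩
  have hdu := dist_le_diam_of_mem hu (mem_image_of_mem u hx) (mem_image_of_mem u hy)
  have hdv := dist_le_diam_of_mem hv (mem_image_of_mem v hx) (mem_image_of_mem v hy)
  calc dist (a • u x + b • v x) (a • u y + b • v y)
      ≤ dist (a • u x) (a • u y) + dist (b • v x) (b • v y) := dist_add_add_le _ _ _ _
    _ = a * dist (u x) (u y) + b * dist (v x) (v y) := by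
        rw [dist_smul₀, dist_smul₀, Real.norm_of_nonneg ha, Real.norm_of_nonneg hb]
    _ ≤ a * diam (u '' s) + b * diam (v '' s) := by gcongr

lemma csInf_le_smul_add_smul {S T U : Set ℝ} (hS : S.Nonempty) (hS' : BddBelow S)
    (hT : T.Nonempty) (hT' : BddBelow T) (hU : BddBelow U) {a b : ℝ} (ha : 0 ≤ a) (hb : 0 ≤ b)
    (hsub : a • S + b • T ⊆ U) :
    sInf U ≤ a * sInf S + b * sInf T :=
  calc sInf U ≤ sInf (a • S + b • T) :=
        csInf_le_csInf hU ((hS.smul_set).add hT.smul_set) hsub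
    _ = a * sInf S + b * sInf T := by
        rw [csInf_add hS.smul_set (hS'.smul_of_nonneg ha) hT.smul_set (hT'.smul_of_nonneg hb),
          Real.sInf_smul_of_nonneg ha, Real.sInf_smul_of_nonneg hb, smul_eq_mul, smul_eq_mul]

section OmegaX

variable {Ω Y : Type*} [TopologicalSpace Ω] [NormedAddCommGroup Y]

def omegaXLevels (X M : Set (Ω →ᵇ Y)) : Set ℝ :=
  {ε : ℝ | 0 < ε ∧ ∃ (n : ℕ) (A : Fin n → Set Ω), IsPartition A ∧
    ∃ (m : ℕ) (φ : Fin m → (Ω →ᵇ Y)), (∀ j, φ j ∈ X) ∧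
      ∀ f ∈ M, ∃ j, ∀ i, diam ((⇑(f - φ j) : Ω → Y) '' A i) ≤ ε}

lemma omegaX_eq_sInf_omegaXLevels (X M : Set (Ω →ᵇ Y)) :
    omegaX X M = sInf (omegaXLevels X M) := rfl

lemma bddBelow_omegaXLevels (X M : Set (Ω →ᵇ Y)) : BddBelow (omegaXLevels X M) :=
  ⟨0, fun _ hε => hε.1.le⟩

/-- A single cell and the single centre `0` already work at level `2 R + 1` when `M` lies in
the ball of radius `R`. -/
lemma omegaXLevels_nonempty {X M : Set (Ω →ᵇ Y)} (h0 : (0 : Ω →ᵇ Y) ∈ X)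
    (hM : Bornology.IsBounded M) : (omegaXLevels X M).Nonempty := by
  obtain ⟨R, hR₀, hR⟩ := hM.exists_pos_norm_le
  refine ⟨2 * R + 1, by positivity, 1, fun _ => univ,
    ⟨iUnion_const univ, Subsingleton.pairwise⟩,
    1, fun _ => 0, fun _ => h0, fun f hf => ⟨0, fun _ => ?_⟩⟩
  apply diam_le_of_forall_dist_le (by positivity)
  rintro _ ⟨x, -, rfl⟩ _ ⟨y, -, rfl⟩
  rw [sub_zero]
  linarith [f.dist_le_two_norm x y, hR f hf]

lemma smul_add_smul_mem_omegaXLevels [NormedSpace ℝ Y] (X : Submodule ℝ (Ω →ᵇ Y))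
    {M N : Set (Ω →ᵇ Y)} {a b ε₁ ε₂ : ℝ} (ha : 0 ≤ a) (hb : 0 ≤ b) (hab : 0 < a + b)
    (hε₁ : ε₁ ∈ omegaXLevels X M) (hε₂ : ε₂ ∈ omegaXLevels X N) :
    a * ε₁ + b * ε₂ ∈ omegaXLevels X (image2 (fun f g => a • f + b • g) M N) := by
  obtain ⟨hε₁, n₁, A, hA, m₁, φ, hφ, hMφ⟩ := hε₁
  obtain ⟨hε₂, n₂, B, hB, m₂, ψ, hψ, hNψ⟩ := hε₂
  have hpos : 0 < a * ε₁ + b * ε₂ := by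
    nlinarith [mul_le_mul_of_nonneg_left (min_le_left ε₁ ε₂) ha,
      mul_le_mul_of_nonneg_left (min_le_right ε₁ ε₂) hb, lt_min hε₁ hε₂]
  refine ⟨hpos, n₁ * n₂, _, hA.inter hB, m₁ * m₂,
    fun q => a • φ (finProdFinEquiv.symm q).1 + b • ψ (finProdFinEquiv.symm q).2,
    fun q => X.add_mem (X.smul_mem _ (hφ _)) (X.smul_mem _ (hψ _)), ?_⟩
  rintro _ ⟨f, hf, g, hg, rfl⟩
  obtain ⟨j, hj⟩ := hMφ f hf
  obtain ⟨k, hk⟩ := hNψ g hg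
  refine ⟨finProdFinEquiv (j, k), fun p => ?_⟩
  set s := A (finProdFinEquiv.symm p).1 ∩ B (finProdFinEquiv.symm p).2
  have hcomb : (⇑(a • f + b • g - (a • φ j + b • ψ k)) : Ω → Y) =
      fun x => a • (f - φ j) x + b • (g - ψ k) x := by
    ext x
    simp only [coe_sub, coe_add, coe_smul, Pi.sub_apply, Pi.add_apply, smul_sub]
    abel
  have hbdd : ∀ h : Ω →ᵇ Y, ∀ t : Set Ω, Bornology.IsBounded ((⇑h : Ω → Y) '' t) :=
    fun h t => h.isBounded_range.subset (image_subset_range _ _)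
  simp only [Equiv.symm_apply_apply, hcomb]
  calc diam ((fun x => a • (f - φ j) x + b • (g - ψ k) x) '' s)
      ≤ a * diam (⇑(f - φ j) '' s) + b * diam (⇑(g - ψ k) '' s) :=
        diam_image_smul_add_smul_le (hbdd _ _) (hbdd _ _) ha hb
    _ ≤ a * ε₁ + b * ε₂ := by
        gcongr
        · exact (diam_mono (image_mono inter_subset_left) (hbdd _ _)).trans (hj _)
        · exact (diam_mono (image_mono inter_subset_right) (hbdd _ _)).trans (hk _)

lemma omegaX_image2_smul_add_smul_le [NormedSpace ℝ Y] (X : Submodule ℝ (Ω →ᵇ Y))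
    {M N : Set (Ω →ᵇ Y)} (hM : Bornology.IsBounded M) (hN : Bornology.IsBounded N)
    {a b : ℝ} (ha : 0 ≤ a) (hb : 0 ≤ b) (hab : 0 < a + b) :
    omegaX X (image2 (fun f g => a • f + b • g) M N) ≤ a * omegaX X M + b * omegaX X N := by
  simp only [omegaX_eq_sInf_omegaXLevels]
  refine csInf_le_smul_add_smul (omegaXLevels_nonempty X.zero_mem hM) (bddBelow_omegaXLevels _ _)
    (omegaXLevels_nonempty X.zero_mem hN) (bddBelow_omegaXLevels _ _)
    (bddBelow_omegaXLevels _ _) ha hb ?_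
  rintro _ ⟨_, ⟨ε₁, hε₁, rfl⟩, _, ⟨ε₂, hε₂, rfl⟩, rfl⟩
  exact smul_add_smul_mem_omegaXLevels X ha hb hab hε₁ hε₂

end OmegaX

theorem stmt10_general {Ω Y : Type*} [TopologicalSpace Ω]
    [NormedAddCommGroup Y] [NormedSpace ℝ Y]
    (X : Submodule ℝ (Ω →ᵇ Y))
    (M N : Set (Ω →ᵇ Y))
    (hM : Bornology.IsBounded M) (hN : Bornology.IsBounded N)
    (lam : ℝ) (hlam : lam ∈ Set.Icc (0 : ℝ) 1) :
    omegaX (X : Set (Ω →ᵇ Y)) (Set.image2 (fun f g : Ω →ᵇ Y => lam • f + (1 - lam) • g) M N) ≤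
      lam * omegaX (X : Set (Ω →ᵇ Y)) M + (1 - lam) * omegaX (X : Set (Ω →ᵇ Y)) N :=
  omegaX_image2_smul_add_smul_le X hM hN hlam.1 (sub_nonneg.mpr hlam.2) (by linarith)

theorem stmt10 {Ω Y : Type*} [TopologicalSpace Ω] [DiscreteTopology Ω] [Nonempty Ω]
    [NormedAddCommGroup Y] [NormedSpace ℝ Y] [CompleteSpace Y]
    (X : Submodule ℝ (Ω →ᵇ Y)) (hX : IsClosed (X : Set (Ω →ᵇ Y)))
    (M N : Set (Ω →ᵇ Y)) (hMX : M ⊆ (X : Set (Ω →ᵇ Y))) (hNX : N ⊆ (X : Set (Ω →ᵇ Y)))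
    (hM : Bornology.IsBounded M) (hN : Bornology.IsBounded N)
    (lam : ℝ) (hlam : lam ∈ Set.Icc (0 : ℝ) 1) :
    omegaX (X : Set (Ω →ᵇ Y)) (Set.image2 (fun f g : Ω →ᵇ Y => lam • f + (1 - lam) • g) M N) ≤
      lam * omegaX (X : Set (Ω →ᵇ Y)) M + (1 - lam) * omegaX (X : Set (Ω →ᵇ Y)) N :=
  stmt10_general X M N hM hN lam hlam
end

section
/- For any bounded subset M of B(Ω,Y), the Hausdorff measure of noncompactness of M in B(Ω,Y) satisfies γ_B(M) ≤ μ_γ(M) + ω_B(M). -/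
open Metric Set BoundedContinuousFunction

/-!
Fix a partition `{A_i}` and functions `φ_j` witnessing `ω_B(M) ≤ ε`, choose a point `p_i ∈ A_i`,
and a finite `(μ_γ(M) + η)`-net of each `M(p_i)`. If `f ∈ M` is paired with `φ_j` and `c_i` is a
net point near `f(p_i)`, then on `A_i` the function `φ_j + c_i - φ_j(p_i)` is within
`ε + μ_γ(M) + η` of `f`. Finitely many such functions arise, and they are bounded and continuous
because they take finitely many corrections and `Ω` is discrete.
-/

open Bornology

section HausMNC

variable {E : Type*} [PseudoMetricSpace E] {A : Set E}

theorem hausMNC_nonneg (A : Set E) : 0 ≤ hausMNC A :=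
  Real.sInf_nonneg fun _ hε => hε.1.le

theorem hausMNC_le_of_subset_biUnion_closedBall {ε : ℝ} {F : Set E} (hε : 0 < ε)
    (hF : F.Finite) (hA : A ⊆ ⋃ y ∈ F, closedBall y ε) : hausMNC A ≤ ε :=
  csInf_le ⟨0, fun _ h => h.1.le⟩ ⟨hε, F, hF, subset_univ F, hA⟩

theorem hausMNC_le_of_subset_closedBall {c : E} {R : ℝ} (hR : 0 < R)
    (hA : A ⊆ closedBall c R) : hausMNC A ≤ R :=
  hausMNC_le_of_subset_biUnion_closedBall hR (finite_singleton c) (by simpa using hA)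

theorem Bornology.IsBounded.exists_finite_closedBall_cover (hA : IsBounded A) :
    ∃ ε > 0, ∃ F : Set E, F.Finite ∧ A ⊆ ⋃ y ∈ F, closedBall y ε := by
  rcases A.eq_empty_or_nonempty with rfl | ⟨a, -⟩
  · exact ⟨1, one_pos, ∅, finite_empty, empty_subset _⟩
  obtain ⟨R, hR⟩ := hA.subset_closedBall a
  refine ⟨max R 1, by positivity, {a}, finite_singleton a, ?_⟩
  simpa using hR.trans (closedBall_subset_closedBall (le_max_left R 1))

theorem Bornology.IsBounded.exists_finite_closedBall_cover_of_hausMNC_lt (hA : IsBounded A)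
    {r : ℝ} (h : hausMNC A < r) : ∃ F : Set E, F.Finite ∧ A ⊆ ⋃ y ∈ F, closedBall y r := by
  obtain ⟨ε, hε, F, hF, hAF⟩ := hA.exists_finite_closedBall_cover
  obtain ⟨δ, ⟨-, G, hG, -, hAG⟩, hδ⟩ :=
    exists_lt_of_csInf_lt (by exact ⟨ε, hε, F, hF, subset_univ F, hAF⟩) h
  exact ⟨G, hG, hAG.trans (biUnion_mono subset_rfl fun y _ => closedBall_subset_closedBall hδ.le)⟩

end HausMNC

theorem IsPartition.exists_finite_range_rep {Ω : Type*} {n : ℕ} {A : Fin n → Set Ω}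
    (hA : IsPartition A) :
    ∃ p : Ω → Ω, (range p).Finite ∧ ∀ x, ∃ i, x ∈ A i ∧ p x ∈ A i := by
  have hcov (x : Ω) : ∃ i, x ∈ A i := mem_iUnion.1 (hA.1 ▸ mem_univ x)
  choose idx hidx using hcov
  let rep : {i // (A i).Nonempty} → Ω := fun i => i.2.some
  refine ⟨fun x => rep ⟨idx x, x, hidx x⟩, (finite_range rep).subset ?_, fun x =>
    ⟨idx x, hidx x, Nonempty.some_mem _⟩⟩
  rintro _ ⟨x, rfl⟩
  exact mem_range_self _

section BoundedFunctions

variable {Ω Y : Type*} [TopologicalSpace Ω] [NormedAddCommGroup Y] {M : Set (Ω →ᵇ Y)}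

theorem evalSet_subset_closedBall {C : ℝ} (hC : ∀ f ∈ M, ‖f‖ ≤ C) (x : Ω) :
    evalSet M x ⊆ closedBall 0 C := by
  rintro _ ⟨f, hf, rfl⟩
  simpa using (norm_coe_le_norm f x).trans (hC f hf)

theorem isBounded_evalSet (hM : IsBounded M) (x : Ω) : IsBounded (evalSet M x) :=
  let ⟨_, hC⟩ := hM.exists_norm_le
  isBounded_closedBall.subset (evalSet_subset_closedBall hC x)

theorem hausMNC_evalSet_le_muGamma (hM : IsBounded M) (x : Ω) :
    hausMNC (evalSet M x) ≤ muGamma M := by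
  obtain ⟨C, hC0, hC⟩ := hM.exists_pos_norm_le
  refine le_ciSup (f := fun x => hausMNC (evalSet M x)) ⟨C, ?_⟩ x
  rintro _ ⟨y, rfl⟩
  exact hausMNC_le_of_subset_closedBall hC0 (evalSet_subset_closedBall hC y)

theorem muGamma_nonneg (M : Set (Ω →ᵇ Y)) : 0 ≤ muGamma M :=
  Real.iSup_nonneg fun _ => hausMNC_nonneg _

theorem hausMNC_le_add_of_forall_dist_comp_le [DiscreteTopology Ω] (hM : IsBounded M)
    {p : Ω → Ω} (hp : (range p).Finite) {m : ℕ} (φ : Fin m → Ω →ᵇ Y) {ε r : ℝ}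
    (hε : 0 ≤ ε) (hr : 0 < r) (hφ : ∀ f ∈ M, ∃ j, ∀ x, dist ((f - φ j) x) ((f - φ j) (p x)) ≤ ε)
    (hMr : ∀ x, hausMNC (evalSet M x) < r) : hausMNC M ≤ r + ε := by
  have : Finite (range p) := hp.to_subtype
  have hnet (y : range p) : ∃ F : Set Y, F.Finite ∧ evalSet M y ⊆ ⋃ c ∈ F, closedBall c r :=
    (isBounded_evalSet hM y).exists_finite_closedBall_cover_of_hausMNC_lt (hMr y)
  choose F hF hMF using hnet
  let g (j : Fin m) (c : range p → Y) : Ω →ᵇ Y :=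
    φ j + (mkOfCompact ⟨fun y => c y - φ j y, continuous_of_discreteTopology⟩).compContinuous
      ⟨rangeFactorization p, continuous_of_discreteTopology⟩
  have hg j c x : g j c x = φ j x + (c (rangeFactorization p x) - φ j (p x)) := rfl
  refine hausMNC_le_of_subset_biUnion_closedBall (by positivity)
    ((finite_univ.prod (Finite.pi' hF)).image fun jc => g jc.1 jc.2) ?_
  intro f hf
  obtain ⟨j, hj⟩ := hφ f hf
  have hc (y : range p) : ∃ c ∈ F y, dist (f y) c ≤ r := by simpa using hMF y ⟨f, hf, rfl⟩
  choose c hcF hc using hc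
  refine mem_iUnion₂.2 ⟨g j c, ⟨(j, c), ⟨mem_univ j, hcF⟩, rfl⟩,
    (dist_le (by positivity)).2 fun x => ?_⟩
  calc dist (f x) (g j c x)
      = ‖((f - φ j) x - (f - φ j) (p x)) + (f (p x) - c (rangeFactorization p x))‖ := by
        rw [dist_eq_norm, hg]
        simp only [coe_sub, Pi.sub_apply]
        abel_nf
    _ ≤ ε + r := norm_add_le_of_le ((dist_eq_norm _ _).symm.trans_le (hj x))
        ((dist_eq_norm _ _).symm.trans_le (hc (rangeFactorization p x)))
    _ = r + ε := add_comm ε r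

theorem le_omegaX_univ (hM : IsBounded M) {b : ℝ}
    (h : ∀ ε > 0, ∀ (n : ℕ) (A : Fin n → Set Ω), IsPartition A → ∀ (m : ℕ)
      (φ : Fin m → Ω →ᵇ Y), (∀ f ∈ M, ∃ j, ∀ i, diam (⇑(f - φ j) '' A i) ≤ ε) → b ≤ ε) :
    b ≤ omegaX univ M := by
  obtain ⟨C, hC0, hC⟩ := hM.exists_pos_norm_le
  refine le_csInf ⟨2 * C, by positivity, 1, fun _ => univ,
    ⟨iUnion_const _, Subsingleton.pairwise⟩, 1, fun _ => 0, fun _ => mem_univ _,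
    fun f hf => ⟨0, fun _ => diam_le_of_subset_closedBall (x := 0) hC0.le ?_⟩⟩ ?_
  · rintro _ ⟨x, -, rfl⟩
    simpa using (norm_coe_le_norm f x).trans (hC f hf)
  · rintro ε ⟨hε, n, A, hA, m, φ, -, hφ⟩
    exact h ε hε n A hA m φ hφ

end BoundedFunctions

theorem stmt15_general {Ω Y : Type*} [TopologicalSpace Ω] [DiscreteTopology Ω]
    [NormedAddCommGroup Y]
    (M : Set (Ω →ᵇ Y)) (hM : Bornology.IsBounded M) :
    hausMNC M ≤ muGamma M + omegaX Set.univ M := by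
  rw [← sub_le_iff_le_add']
  refine le_omegaX_univ hM fun ε hε n A hA m φ hφ => ?_
  obtain ⟨p, hp, hpA⟩ := hA.exists_finite_range_rep
  have hφp : ∀ f ∈ M, ∃ j, ∀ x, dist ((f - φ j) x) ((f - φ j) (p x)) ≤ ε := by
    intro f hf
    obtain ⟨j, hj⟩ := hφ f hf
    refine ⟨j, fun x => ?_⟩
    obtain ⟨i, hx, hpx⟩ := hpA x
    exact (dist_le_diam_of_mem ((f - φ j).isBounded_range.subset (image_subset_range _ _))
      (mem_image_of_mem _ hx) (mem_image_of_mem _ hpx)).trans (hj i)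
  rw [sub_le_iff_le_add']
  refine le_of_forall_pos_le_add fun η hη => ?_
  have hr : 0 < muGamma M + η := by linarith [muGamma_nonneg M]
  have := hausMNC_le_add_of_forall_dist_comp_le hM hp φ hε.le hr hφp fun x =>
    (hausMNC_evalSet_le_muGamma hM x).trans_lt (lt_add_of_pos_right _ hη)
  linarith

theorem stmt15 {Ω Y : Type*} [TopologicalSpace Ω] [DiscreteTopology Ω] [Nonempty Ω]
    [NormedAddCommGroup Y] [NormedSpace ℝ Y] [CompleteSpace Y]
    (M : Set (Ω →ᵇ Y)) (hM : Bornology.IsBounded M) :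
    hausMNC M ≤ muGamma M + omegaX Set.univ M :=
  stmt15_general M hM
end

section
/- If X is a Banach subspace of the space TB(Ω,Y) of totally bounded functions and M ⊆ X is bounded, then σ_γ(M) = γ(M(Ω)) ≤ γ_X(M), where γ_X is the Hausdorff measure of noncompactness in X. -/
open Metric Set BoundedContinuousFunction

/-!
An `ε`-net `F ⊆ X` of `M` in the supremum norm gives, pointwise, that every value `f x` with
`f ∈ M` lies within `ε` of the set `K = ⋃ φ ∈ F, φ(Ω)`. Since `F` is finite and every function
of `X` has totally bounded range, `K` is totally bounded, so a finite `δ`-net of `K` is an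
`(ε + δ)`-net of `M(Ω)`. Letting `δ → 0` gives `γ(M(Ω)) ≤ ε`.
-/

lemma le_hausMNCin {E : Type*} [PseudoMetricSpace E] {S A : Set E} {c : ℝ}
    (hA : Bornology.IsBounded A) (hS : S.Nonempty)
    (h : ∀ ε > 0, ∀ F : Set E, F.Finite → F ⊆ S → A ⊆ ⋃ y ∈ F, closedBall y ε → c ≤ ε) :
    c ≤ hausMNCin S A := by
  obtain ⟨s, hs⟩ := hS
  obtain ⟨R, hR, hAR⟩ := hA.subset_closedBall_lt 0 s
  refine le_csInf ⟨R, hR, {s}, finite_singleton s, singleton_subset_iff.2 hs, by simpa⟩ ?_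
  rintro ε ⟨hε, F, hF, hFS, hAF⟩
  exact h ε hε F hF hFS hAF

lemma hausMNC_le_of_forall_exists_dist_le {E : Type*} [PseudoMetricSpace E] {A K : Set E}
    {ε : ℝ} (hK : TotallyBounded K) (hε : 0 ≤ ε) (hA : ∀ a ∈ A, ∃ k ∈ K, dist a k ≤ ε) :
    hausMNC A ≤ ε := by
  refine le_of_forall_pos_le_add fun δ hδ => ?_
  obtain ⟨t, ht, hKt⟩ := totallyBounded_iff.mp hK δ hδ
  refine csInf_le ⟨0, fun _ h => h.1.le⟩ ⟨by positivity, t, ht, subset_univ t, fun a ha => ?_⟩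
  obtain ⟨k, hk, hak⟩ := hA a ha
  obtain ⟨y, hy, hky⟩ := mem_iUnion₂.mp (hKt hk)
  exact mem_biUnion hy <| mem_closedBall.2 <|
    (dist_triangle a k y).trans (add_le_add hak (mem_ball.1 hky).le)

lemma exists_dist_le_of_mem_rangeSet {Ω Y : Type*} [TopologicalSpace Ω] [NormedAddCommGroup Y]
    {M F : Set (Ω →ᵇ Y)} {ε : ℝ} (hMF : M ⊆ ⋃ φ ∈ F, closedBall φ ε) :
    ∀ y ∈ rangeSet M, ∃ k ∈ ⋃ φ ∈ F, range φ, dist y k ≤ ε := by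
  rintro _ hy
  obtain ⟨f, hf, x, rfl⟩ := mem_iUnion₂.mp hy
  obtain ⟨φ, hφ, hfφ⟩ := mem_iUnion₂.mp (hMF hf)
  exact ⟨φ x, mem_biUnion hφ (mem_range_self x),
    (BoundedContinuousFunction.dist_coe_le_dist x).trans (mem_closedBall.1 hfφ)⟩

theorem stmt18_general {Ω Y : Type*} [TopologicalSpace Ω]
    [NormedAddCommGroup Y] [NormedSpace ℝ Y]
    (X : Submodule ℝ (Ω →ᵇ Y))
    (hXTB : ∀ f : Ω →ᵇ Y, f ∈ X → TotallyBounded (Set.range (f : Ω → Y)))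
    (M : Set (Ω →ᵇ Y)) (hM : Bornology.IsBounded M) :
    hausMNC (rangeSet M) ≤ hausMNCin (X : Set (Ω →ᵇ Y)) M := by
  refine le_hausMNCin hM ⟨0, X.zero_mem⟩ fun ε hε F hF hFX hMF => ?_
  have hK : TotallyBounded (⋃ φ ∈ F, range (φ : Ω → Y)) :=
    (totallyBounded_biUnion hF).2 fun φ hφ => hXTB φ (hFX hφ)
  exact hausMNC_le_of_forall_exists_dist_le hK hε.le (exists_dist_le_of_mem_rangeSet hMF)

theorem stmt18 {Ω Y : Type*} [TopologicalSpace Ω] [DiscreteTopology Ω] [Nonempty Ω]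
    [NormedAddCommGroup Y] [NormedSpace ℝ Y] [CompleteSpace Y]
    (X : Submodule ℝ (Ω →ᵇ Y)) (hX : IsClosed (X : Set (Ω →ᵇ Y)))
    (hXTB : ∀ f : Ω →ᵇ Y, f ∈ X → TotallyBounded (Set.range (f : Ω → Y)))
    (M : Set (Ω →ᵇ Y)) (hMX : M ⊆ (X : Set (Ω →ᵇ Y))) (hM : Bornology.IsBounded M) :
    hausMNC (rangeSet M) ≤ hausMNCin (X : Set (Ω →ᵇ Y)) M :=
  stmt18_general X hXTB M hM
end
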